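/- arXiv:1510.05455 — 2 statements merged into one kernel-verified Lean document; each statement's English description precedes it below -/
import Mathlib

section
/- Let v be a radial weight in the class D̂ satisfying M₁(v) = sup_{0<r<1} (∫_r¹ v̂(s)/(1-s)² ds)^{1/2} (∫₀^r 1/v̂(s) ds)^{1/2} < ∞. Then for every q > 0 there exists a constant C = C(q,v) > 0 such that Σ_{n=1}^k 2^{-qn} (v_{2^{n+1}})^{-q} ≤ C · 2^{-qk} (v_{2^{k+1}})^{-q} for all integers k ≥ 1, where v_x = ∫₀¹ s^x v(s) ds. -/
open MeasureTheory Real Set Filter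

noncomputable section

/-- `hatw v r = ∫_r^1 v(s) ds`. -/
def hatw (v : ℝ → ℝ) (r : ℝ) : ℝ := ∫ s in r..1, v s

/-- A radial weight: measurable, positive on `[0,1)`, integrable on `(0,1)`. -/
def RadialWeight (v : ℝ → ℝ) : Prop :=
  Measurable v ∧ (∀ r ∈ Set.Ico (0:ℝ) 1, 0 < v r) ∧
    MeasureTheory.IntegrableOn v (Set.Ioo 0 1)

/-- Membership in the class `D̂`. -/
def DoublingD (v : ℝ → ℝ) : Prop :=
  ∃ C : ℝ, 1 ≤ C ∧ ∀ r ∈ Set.Ico (0:ℝ) 1, hatw v r ≤ C * hatw v ((1+r)/2)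

/-- Squared Dirichlet-type norm `‖f‖_{D_v}^2`. -/
def DvSq (v : ℝ → ℝ) (f : ℂ → ℂ) : ENNReal :=
  (‖f 0‖₊ : ENNReal)^2 +
    (ENNReal.ofReal Real.pi)⁻¹ *
      ∫⁻ z in Metric.ball (0:ℂ) 1, (‖deriv f z‖₊ : ENNReal)^2 * ENNReal.ofReal (v ‖z‖)

/-- The Muckenhoupt type quantity `M₁(v)`. -/
def M1v (v : ℝ → ℝ) : ENNReal :=
  ⨆ r ∈ Set.Ioo (0:ℝ) 1,
    (∫⁻ s in Set.Ioo r 1, ENNReal.ofReal (hatw v s / (1-s)^2)) ^ (1/2 : ℝ) *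
    (∫⁻ s in Set.Ioo (0:ℝ) r, ENNReal.ofReal (1 / hatw v s)) ^ (1/2 : ℝ)

/-- The Muckenhoupt type quantity `M₂(v)`. -/
def M2v (v : ℝ → ℝ) : ENNReal :=
  ⨆ r ∈ Set.Ioo (0:ℝ) 1,
    (∫⁻ s in Set.Ioo (0:ℝ) r, ENNReal.ofReal (hatw v s / (1-s)^4)) ^ (1/2 : ℝ) *
    (∫⁻ s in Set.Ioo r 1, ENNReal.ofReal ((1-s)^2 / hatw v s)) ^ (1/2 : ℝ)

/-- The moment `v_x = ∫_0^1 s^x v(s) ds`. -/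
def vx (v : ℝ → ℝ) (x : ℕ) : ℝ := ∫ s in (0:ℝ)..1, s^x * v s

/-- `M_∞(s,f)`, the maximum of `|f|` on the circle of radius `s`. -/
def Minf (f : ℂ → ℂ) (s : ℝ) : ℝ := sSup ((fun z => ‖f z‖) '' Metric.sphere (0:ℂ) s)

/-- `M₂(r,h)`. -/
def M2mean (h : ℂ → ℂ) (r : ℝ) : ℝ :=
  Real.sqrt ((2*Real.pi)⁻¹ * ∫ θ in (-Real.pi)..Real.pi, ‖h ((r:ℂ) * Complex.exp (θ * Complex.I))‖^2)

/-- The norm of `B(2,∞)` (with values in `[0,∞]`). -/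
def B2infE (g : ℂ → ℂ) : ENNReal :=
  (‖g 0‖₊ : ENNReal) +
    ⨆ r ∈ Set.Ioo (0:ℝ) 1, ENNReal.ofReal (M2mean (deriv g) r * Real.sqrt (1-r))

/-- The `p`-th power of the norm of `B(2,p)` (with values in `[0,∞]`). -/
def B2pE (p : ℝ) (g : ℂ → ℂ) : ENNReal :=
  ENNReal.ofReal (‖g 0‖ ^ p) +
    ∫⁻ r in Set.Ioo (0:ℝ) 1, ENNReal.ofReal (M2mean (deriv g) r ^ p * (1-r)^(p/2-1))

/-- The generalized Hilbert operator `H_g`. -/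
def Hg (g f : ℂ → ℂ) (z : ℂ) : ℂ := ∫ t in Set.Ioo (0:ℝ) 1, f t * deriv g (t * z)

/-- The Hilbert operator `H` acting on functions on `[0,1)`. -/
def Hop (φ : ℝ → ℂ) (z : ℂ) : ℂ := ∫ t in Set.Ioo (0:ℝ) 1, φ t / (1 - t * z)

/-- The sublinear Hilbert operator `H̃`. -/
def Htil (φ : ℝ → ℂ) (z : ℂ) : ℂ := ∫ t in Set.Ioo (0:ℝ) 1, (‖φ t‖ : ℂ) / (1 - t * z)

/-- Squared norm in `L²_{V̂₂}`. -/
def L2V2sq (v : ℝ → ℝ) (φ : ℝ → ℂ) : ENNReal :=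
  ∫⁻ t in Set.Ioo (0:ℝ) 1, (‖φ t‖₊ : ENNReal)^2 * ENNReal.ofReal (hatw v t / (1-t)^2)

/-- Taylor coefficient `ĝ(k)` of `g` at the origin. -/
def gcoef (g : ℂ → ℂ) (k : ℕ) : ℂ := iteratedDeriv k g 0 / (Nat.factorial k)

/-!
Write `W = v̂` and `r_n = 1 - 2⁻ⁿ`. For `v ∈ D̂` the moment `v_{2ⁿ}` is comparable to `W(r_n)`:
from below trivially, and from above because on `[r_j, r_{j+1}]` the factor `s^{2ⁿ}` is at most
`exp (-2^(n-j-1))`, which beats the doubling growth `W(r_j) ≤ Cⁿ⁻ʲ W(r_n)`.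

Let `Φ(r) = ∫_r^1 W(s) / (1 - s)² ds` (`M1tail v r`). Testing `M₁(v)` at `r_n` bounds
`Φ(r_n) ≲ 2ⁿ W(r_n)`, while the piece of `Φ(r_n)` over `[r_n, r_{n+1}]` is `≳ 2ⁿ W(r_{n+1})`.
Together, `Φ(r_{n+1}) ≤ θ Φ(r_n)` for some `θ < 1`, so `2ⁿ W(r_n)`, and with it
`aₙ = 2ⁿ v_{2ⁿ⁺¹}`, decays geometrically. Then `∑_{n ≤ k} aₙ^(-q)` is dominated by a geometric
series with largest term `a_k^(-q)`.
-/

open scoped ENNReal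

lemma summable_pow_mul_exp_neg_two_pow (C : ℝ) : Summable fun i : ℕ => C ^ i * exp (-2 ^ i) := by
  have hlim : Tendsto (fun i : ℕ => |C| * exp (-2 ^ i)) atTop (nhds 0) := by
    simpa using (tendsto_exp_neg_atTop_nhds_zero.comp
      (tendsto_pow_atTop_atTop_of_one_lt one_lt_two)).const_mul |C|
  refine summable_of_ratio_norm_eventually_le (r := 1 / 2) (by norm_num) ?_
  filter_upwards [hlim.eventually (ge_mem_nhds (by norm_num : (0:ℝ) < 1 / 2))] with i hi
  have hexp : exp (-2 ^ (i + 1)) = exp (-2 ^ i) * exp (-2 ^ i) := by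
    rw [← Real.exp_add]; ring_nf
  simp only [norm_mul, norm_pow, Real.norm_eq_abs, abs_of_pos (exp_pos _)]
  rw [hexp, pow_succ]
  calc |C| ^ i * |C| * (exp (-2 ^ i) * exp (-2 ^ i))
      = |C| * exp (-2 ^ i) * (|C| ^ i * exp (-2 ^ i)) := by ring
    _ ≤ 1 / 2 * (|C| ^ i * exp (-2 ^ i)) := by gcongr

lemma geom_decay_of_tail_bounds {φ χ : ℕ → ℝ} {A B : ℝ} (hA : 0 ≤ A) (hB : 0 ≤ B)
    (hφ : ∀ j, 0 ≤ φ j) (hup : ∀ j, φ j ≤ A * χ j) (hstep : ∀ j, φ (j + 1) + χ (j + 1) ≤ φ j)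
    (hχ : ∀ j, χ j ≤ B * χ (j + 1)) (n i : ℕ) :
    χ (n + i) ≤ B * A * (A / (1 + A)) ^ i * χ n := by
  have hφstep : ∀ j, φ (j + 1) ≤ A / (1 + A) * φ j := fun j => by
    rw [div_mul_eq_mul_div, le_div_iff₀ (by positivity)]
    nlinarith [hup (j + 1), mul_le_mul_of_nonneg_left (hstep j) hA]
  have hgeom : φ (n + i) ≤ (A / (1 + A)) ^ i * φ n :=
    le_geom (u := fun i => φ (n + i)) (by positivity) i fun k _ => hφstep (n + k)
  calc χ (n + i) ≤ B * χ (n + i + 1) := hχ _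
    _ ≤ B * φ (n + i) := by gcongr; linarith [hstep (n + i), hφ (n + i + 1)]
    _ ≤ B * ((A / (1 + A)) ^ i * (A * χ n)) := by gcongr; exact hgeom.trans (by gcongr; exact hup n)
    _ = B * A * (A / (1 + A)) ^ i * χ n := by ring

lemma sum_Icc_pow_sub_le {ρ : ℝ} (h0 : 0 ≤ ρ) (h1 : ρ < 1) (m k : ℕ) :
    ∑ n ∈ Finset.Icc m k, ρ ^ (k - n) ≤ (1 - ρ)⁻¹ :=
  calc ∑ n ∈ Finset.Icc m k, ρ ^ (k - n) ≤ ∑ n ∈ Finset.range (k + 1), ρ ^ (k - n) :=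
        Finset.sum_le_sum_of_subset_of_nonneg (fun n hn => by
          simp only [Finset.mem_Icc, Finset.mem_range] at hn ⊢; omega)
          fun _ _ _ => by positivity
    _ = ∑ n ∈ Finset.range (k + 1), ρ ^ n := by
        simpa using Finset.sum_range_reflect (fun n => ρ ^ n) (k + 1)
    _ ≤ (1 - ρ)⁻¹ := by
        have h := geom_sum_Ico_le_of_lt_one (m := 0) (n := k + 1) h0 h1
        rwa [Nat.Ico_zero_eq_range, pow_zero, one_div] at h

theorem exists_sum_rpow_neg_le {a : ℕ → ℝ} {E θ q : ℝ} (ha : ∀ n, 0 < a n) (hθ0 : 0 ≤ θ)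
    (hθ1 : θ < 1) (hdecay : ∀ n i, a (n + i) ≤ E * θ ^ i * a n) (hq : 0 < q) :
    ∃ C, 0 < C ∧ ∀ m k, ∑ n ∈ Finset.Icc m k, a n ^ (-q) ≤ C * a k ^ (-q) := by
  have hE : 0 < E := by
    have h : 1 * a 0 ≤ E * a 0 := by simpa using hdecay 0 0
    exact one_pos.trans_le (le_of_mul_le_mul_right h (ha 0))
  set ρ := θ ^ q
  have hρ1 : ρ < 1 := rpow_lt_one hθ0 hθ1 hq
  refine ⟨E ^ q * (1 - ρ)⁻¹, by have := sub_pos.mpr hρ1; positivity, fun m k => ?_⟩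
  have hterm : ∀ n ∈ Finset.Icc m k, a n ^ (-q) ≤ E ^ q * a k ^ (-q) * ρ ^ (k - n) := by
    intro n hn
    obtain ⟨i, rfl⟩ : ∃ i, k = n + i := ⟨k - n, by have := (Finset.mem_Icc.mp hn).2; omega⟩
    have h := rpow_le_rpow (ha _).le (hdecay n i) hq.le
    rw [mul_rpow (by positivity) (ha n).le, mul_rpow hE.le (by positivity),
      ← rpow_pow_comm hθ0] at h
    have hk := rpow_pos_of_pos (ha (n + i)) q
    rw [Nat.add_sub_cancel_left, rpow_neg (ha n).le, rpow_neg (ha _).le,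
      inv_le_iff_one_le_mul₀ (rpow_pos_of_pos (ha n) q)]
    calc 1 = a (n + i) ^ q * (a (n + i) ^ q)⁻¹ := (mul_inv_cancel₀ hk.ne').symm
      _ ≤ E ^ q * ρ ^ i * a n ^ q * (a (n + i) ^ q)⁻¹ := by gcongr
      _ = E ^ q * (a (n + i) ^ q)⁻¹ * ρ ^ i * a n ^ q := by ring
  calc ∑ n ∈ Finset.Icc m k, a n ^ (-q)
      ≤ ∑ n ∈ Finset.Icc m k, E ^ q * a k ^ (-q) * ρ ^ (k - n) := Finset.sum_le_sum hterm
    _ = E ^ q * a k ^ (-q) * ∑ n ∈ Finset.Icc m k, ρ ^ (k - n) := by rw [Finset.mul_sum]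
    _ ≤ E ^ q * a k ^ (-q) * (1 - ρ)⁻¹ := by
        have := rpow_pos_of_pos (ha k) (-q)
        gcongr
        exact sum_Icc_pow_sub_le (rpow_nonneg hθ0 q) hρ1 m k
    _ = E ^ q * (1 - ρ)⁻¹ * a k ^ (-q) := by ring

def dyadicRadius (j : ℕ) : ℝ := 1 - ((2:ℝ) ^ j)⁻¹

lemma dyadicRadius_zero : dyadicRadius 0 = 0 := by simp [dyadicRadius]

lemma one_sub_dyadicRadius (j : ℕ) : 1 - dyadicRadius j = ((2:ℝ) ^ j)⁻¹ := sub_sub_cancel _ _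

lemma dyadicRadius_mem_Ico (j : ℕ) : dyadicRadius j ∈ Ico (0:ℝ) 1 := by
  have h : ((2:ℝ) ^ j)⁻¹ ≤ 1 := inv_le_one_of_one_le₀ (one_le_pow₀ one_le_two)
  have h' : 0 < ((2:ℝ) ^ j)⁻¹ := by positivity
  constructor <;> unfold dyadicRadius <;> linarith

lemma dyadicRadius_mem_Icc (j : ℕ) : dyadicRadius j ∈ Icc (0:ℝ) 1 :=
  Ico_subset_Icc_self (dyadicRadius_mem_Ico j)

lemma dyadicRadius_succ (j : ℕ) : dyadicRadius (j + 1) = (1 + dyadicRadius j) / 2 := by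
  rw [dyadicRadius, dyadicRadius, pow_succ, mul_inv]; ring

lemma dyadicRadius_succ_sub (j : ℕ) :
    dyadicRadius (j + 1) - dyadicRadius j = ((2:ℝ) ^ (j + 1))⁻¹ := by
  rw [dyadicRadius_succ, ← one_sub_dyadicRadius, dyadicRadius_succ]; ring

lemma dyadicRadius_mono : Monotone dyadicRadius :=
  monotone_nat_of_le_succ fun j => by
    have := (dyadicRadius_mem_Ico j).2
    rw [dyadicRadius_succ]; linarith

lemma dyadicRadius_succ_pos (j : ℕ) : 0 < dyadicRadius (j + 1) := by
  have := (dyadicRadius_mem_Ico j).1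
  rw [dyadicRadius_succ]; positivity

lemma dyadicRadius_pow_le_exp (j i : ℕ) : dyadicRadius (j + 1) ^ 2 ^ (j + 1 + i) ≤ exp (-2 ^ i) :=
  calc dyadicRadius (j + 1) ^ 2 ^ (j + 1 + i)
      ≤ exp (-((2:ℝ) ^ (j + 1))⁻¹) ^ 2 ^ (j + 1 + i) :=
        pow_le_pow_left₀ (dyadicRadius_mem_Ico _).1 (one_sub_le_exp_neg _) _
    _ = exp (-2 ^ i) := by
        rw [← Real.exp_nat_mul]; push_cast; rw [pow_add 2 (j + 1) i]; field_simp

lemma quarter_le_dyadicRadius_pow (j : ℕ) : 1 / 4 ≤ dyadicRadius (j + 1) ^ 2 ^ (j + 1) := by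
  have bernoulli := one_add_mul_le_pow (a := -((2:ℝ) ^ (j + 1))⁻¹)
    (by have := (dyadicRadius_mem_Ico (j + 1)).1; rw [dyadicRadius] at this; linarith) (2 ^ j)
  have half : 1 + ((2 ^ j : ℕ) : ℝ) * -((2:ℝ) ^ (j + 1))⁻¹ = 1 / 2 := by
    push_cast; rw [pow_succ]; field_simp; ring
  rw [half, ← sub_eq_add_neg, ← dyadicRadius] at bernoulli
  calc (1 / 4 : ℝ) = (1 / 2) ^ 2 := by norm_num
    _ ≤ (dyadicRadius (j + 1) ^ 2 ^ j) ^ 2 := pow_le_pow_left₀ (by norm_num) bernoulli 2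
    _ = dyadicRadius (j + 1) ^ 2 ^ (j + 1) := by rw [← pow_mul, pow_succ]

def DyadicDoubling (v : ℝ → ℝ) (C : ℝ) : Prop :=
  ∀ j, hatw v (dyadicRadius j) ≤ C * hatw v (dyadicRadius (j + 1))

lemma DoublingD.exists_dyadicDoubling {v : ℝ → ℝ} (hD : DoublingD v) :
    ∃ C, DyadicDoubling v C := by
  obtain ⟨C, -, hC⟩ := hD
  exact ⟨C, fun j => by simpa only [dyadicRadius_succ] using hC _ (dyadicRadius_mem_Ico j)⟩

def M1tail (v : ℝ → ℝ) (r : ℝ) : ℝ≥0∞ := ∫⁻ s in Ioo r 1, ENNReal.ofReal (hatw v s / (1 - s) ^ 2)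

def M1head (v : ℝ → ℝ) (r : ℝ) : ℝ≥0∞ := ∫⁻ s in Ioo 0 r, ENNReal.ofReal (1 / hatw v s)

lemma M1tail_mul_M1head_le (v : ℝ → ℝ) {r : ℝ} (hr : r ∈ Ioo (0:ℝ) 1) :
    M1tail v r * M1head v r ≤ M1v v ^ 2 := by
  have h : (M1tail v r * M1head v r) ^ (2:ℝ)⁻¹ ≤ M1v v := by
    rw [ENNReal.mul_rpow_of_nonneg _ _ (by norm_num), ← one_div]
    exact le_iSup₂ (f := fun r (_ : r ∈ Ioo (0:ℝ) 1) =>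
      M1tail v r ^ (1 / 2 : ℝ) * M1head v r ^ (1 / 2 : ℝ)) r hr
  simpa using (ENNReal.rpow_inv_le_iff two_pos).mp h

namespace RadialWeight

variable {v : ℝ → ℝ} {C : ℝ}

lemma integrableOn_Icc (hv : RadialWeight v) : IntegrableOn v (Icc 0 1) :=
  (integrableOn_Icc_iff_integrableOn_Ioo).mpr hv.2.2

lemma intervalIntegrable (hv : RadialWeight v) {a b : ℝ} (ha : a ∈ Icc (0:ℝ) 1)
    (hb : b ∈ Icc (0:ℝ) 1) : IntervalIntegrable v volume a b :=
  (hv.integrableOn_Icc.mono_set (uIcc_subset_Icc ha hb)).intervalIntegrable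

lemma intervalIntegrable_pow_mul (hv : RadialWeight v) (x : ℕ) {a b : ℝ}
    (ha : a ∈ Icc (0:ℝ) 1) (hb : b ∈ Icc (0:ℝ) 1) :
    IntervalIntegrable (fun s => s ^ x * v s) volume a b :=
  (hv.intervalIntegrable ha hb).continuousOn_mul (continuous_pow x).continuousOn

lemma integral_pow_mul_pos (hv : RadialWeight v) (x : ℕ) {a b : ℝ} (ha : 0 ≤ a) (hab : a < b)
    (hb : b ≤ 1) : 0 < ∫ s in a..b, s ^ x * v s :=
  intervalIntegral.intervalIntegral_pos_of_pos_on
    (hv.intervalIntegrable_pow_mul x ⟨ha, hab.le.trans hb⟩ ⟨ha.trans hab.le, hb⟩)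
    (fun s hs => mul_pos (pow_pos (ha.trans_lt hs.1) x)
      (hv.2.1 s ⟨ha.trans hs.1.le, hs.2.trans_le hb⟩)) hab

lemma integral_nonneg (hv : RadialWeight v) {a b : ℝ} (ha : 0 ≤ a) (hab : a ≤ b) (hb : b ≤ 1) :
    0 ≤ ∫ s in a..b, v s := by
  rcases hab.eq_or_lt with rfl | hab
  · simp
  · simpa using (hv.integral_pow_mul_pos 0 ha hab hb).le

lemma vx_pos (hv : RadialWeight v) (x : ℕ) : 0 < vx v x :=
  hv.integral_pow_mul_pos x le_rfl one_pos le_rfl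

lemma hatw_sub_hatw (hv : RadialWeight v) {a b : ℝ} (ha : a ∈ Icc (0:ℝ) 1)
    (hb : b ∈ Icc (0:ℝ) 1) : hatw v a - hatw v b = ∫ s in a..b, v s := by
  have one_mem : (1:ℝ) ∈ Icc (0:ℝ) 1 := ⟨zero_le_one, le_rfl⟩
  rw [hatw, hatw, ← intervalIntegral.integral_add_adjacent_intervals
    (hv.intervalIntegrable ha hb) (hv.intervalIntegrable hb one_mem), add_sub_cancel_right]

lemma hatw_pos (hv : RadialWeight v) {r : ℝ} (hr : r ∈ Ico (0:ℝ) 1) : 0 < hatw v r := by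
  simpa [hatw] using hv.integral_pow_mul_pos 0 hr.1 hr.2 le_rfl

lemma hatw_antitoneOn (hv : RadialWeight v) : AntitoneOn (hatw v) (Icc 0 1) :=
  fun _ ha _ hb hab => sub_nonneg.mp <| (hv.hatw_sub_hatw ha hb).symm ▸
    hv.integral_nonneg ha.1 hab hb.2

lemma integral_pow_mul_le (hv : RadialWeight v) (x : ℕ) {a b : ℝ} (ha : 0 ≤ a) (hab : a ≤ b)
    (hb : b ≤ 1) : ∫ s in a..b, s ^ x * v s ≤ b ^ x * (hatw v a - hatw v b) := by
  have ha' : a ∈ Icc (0:ℝ) 1 := ⟨ha, hab.trans hb⟩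
  have hb' : b ∈ Icc (0:ℝ) 1 := ⟨ha.trans hab, hb⟩
  rw [hv.hatw_sub_hatw ha' hb', ← intervalIntegral.integral_const_mul]
  refine intervalIntegral.integral_mono_on_of_le_Ioo hab (hv.intervalIntegrable_pow_mul x ha' hb')
    ((hv.intervalIntegrable ha' hb').const_mul _) fun s hs => ?_
  have hs0 : 0 ≤ s := ha.trans hs.1.le
  exact mul_le_mul_of_nonneg_right (pow_le_pow_left₀ hs0 hs.2.le x)
    (hv.2.1 s ⟨hs0, hs.2.trans_le hb⟩).le

lemma pow_mul_hatw_le_integral (hv : RadialWeight v) (x : ℕ) {a : ℝ} (ha : a ∈ Icc (0:ℝ) 1) :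
    a ^ x * hatw v a ≤ ∫ s in a..1, s ^ x * v s := by
  have one_mem : (1:ℝ) ∈ Icc (0:ℝ) 1 := ⟨zero_le_one, le_rfl⟩
  rw [hatw, ← intervalIntegral.integral_const_mul]
  refine intervalIntegral.integral_mono_on_of_le_Ioo ha.2
    ((hv.intervalIntegrable ha one_mem).const_mul _) (hv.intervalIntegrable_pow_mul x ha one_mem)
    fun s hs => ?_
  have hs0 : 0 ≤ s := ha.1.trans hs.1.le
  exact mul_le_mul_of_nonneg_right (pow_le_pow_left₀ ha.1 hs.1.le x) (hv.2.1 s ⟨hs0, hs.2⟩).le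

lemma pos_of_hatw_dyadicRadius_le (hv : RadialWeight v)
    (hC : DyadicDoubling v C) : 0 < C :=
  pos_of_mul_pos_left ((hv.hatw_pos (dyadicRadius_mem_Ico 0)).trans_le (hC 0))
    (hv.hatw_pos (dyadicRadius_mem_Ico 1)).le

lemma hatw_dyadicRadius_le_pow_mul (hv : RadialWeight v)
    (hC : DyadicDoubling v C) (j i : ℕ) :
    hatw v (dyadicRadius j) ≤ C ^ i * hatw v (dyadicRadius (j + i)) := by
  induction i with
  | zero => simp
  | succ i ih =>
    calc hatw v (dyadicRadius j) ≤ C ^ i * hatw v (dyadicRadius (j + i)) := ih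
      _ ≤ C ^ i * (C * hatw v (dyadicRadius (j + i + 1))) :=
          mul_le_mul_of_nonneg_left (hC _) (pow_nonneg (hv.pos_of_hatw_dyadicRadius_le hC).le i)
      _ = C ^ (i + 1) * hatw v (dyadicRadius (j + (i + 1))) := by ring_nf

lemma integral_dyadic_piece_le (hv : RadialWeight v)
    (hC : DyadicDoubling v C) (j i : ℕ) :
    ∫ s in dyadicRadius j..dyadicRadius (j + 1), s ^ 2 ^ (j + 1 + i) * v s ≤
      C * (C ^ i * exp (-2 ^ i)) * hatw v (dyadicRadius (j + 1 + i)) := by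
  have hchain : hatw v (dyadicRadius j) - hatw v (dyadicRadius (j + 1)) ≤
      C ^ (1 + i) * hatw v (dyadicRadius (j + 1 + i)) := by
    rw [add_assoc]
    linarith [hv.hatw_pos (dyadicRadius_mem_Ico (j + 1)),
      hv.hatw_dyadicRadius_le_pow_mul hC j (1 + i)]
  calc ∫ s in dyadicRadius j..dyadicRadius (j + 1), s ^ 2 ^ (j + 1 + i) * v s
      ≤ dyadicRadius (j + 1) ^ 2 ^ (j + 1 + i) *
          (hatw v (dyadicRadius j) - hatw v (dyadicRadius (j + 1))) :=
        hv.integral_pow_mul_le _ (dyadicRadius_mem_Ico j).1 (dyadicRadius_mono j.le_succ)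
          (dyadicRadius_mem_Ico _).2.le
    _ ≤ exp (-2 ^ i) * (C ^ (1 + i) * hatw v (dyadicRadius (j + 1 + i))) :=
        mul_le_mul (dyadicRadius_pow_le_exp j i) hchain
          (sub_nonneg.mpr (hv.hatw_antitoneOn (dyadicRadius_mem_Icc _) (dyadicRadius_mem_Icc _)
            (dyadicRadius_mono j.le_succ))) (exp_pos _).le
    _ = C * (C ^ i * exp (-2 ^ i)) * hatw v (dyadicRadius (j + 1 + i)) := by ring

theorem exists_vx_le_mul_hatw (hv : RadialWeight v)
    (hC : DyadicDoubling v C) :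
    ∃ K, 0 < K ∧ ∀ m, vx v (2 ^ m) ≤ K * hatw v (dyadicRadius m) := by
  have hC0 := (hv.pos_of_hatw_dyadicRadius_le hC).le
  set S := ∑' i, C ^ i * exp (-2 ^ i)
  have hS : 0 ≤ S := tsum_nonneg fun i => by positivity
  refine ⟨C * S + 1, by positivity, fun m => ?_⟩
  have hWm := (hv.hatw_pos (dyadicRadius_mem_Ico m)).le
  have hsplit : vx v (2 ^ m) = ∑ j ∈ Finset.range m,
      (∫ s in dyadicRadius j..dyadicRadius (j + 1), s ^ 2 ^ m * v s) +
        ∫ s in dyadicRadius m..1, s ^ 2 ^ m * v s := by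
    rw [intervalIntegral.sum_integral_adjacent_intervals fun k _ => hv.intervalIntegrable_pow_mul _
      (dyadicRadius_mem_Icc k) (dyadicRadius_mem_Icc (k + 1)), dyadicRadius_zero,
      intervalIntegral.integral_add_adjacent_intervals
        (hv.intervalIntegrable_pow_mul _ ⟨le_rfl, zero_le_one⟩ (dyadicRadius_mem_Icc m))
        (hv.intervalIntegrable_pow_mul _ (dyadicRadius_mem_Icc m) ⟨zero_le_one, le_rfl⟩), vx]
  have hpieces : ∑ j ∈ Finset.range m,
      ∫ s in dyadicRadius j..dyadicRadius (j + 1), s ^ 2 ^ m * v s ≤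
        C * S * hatw v (dyadicRadius m) :=
    calc _ ≤ ∑ j ∈ Finset.range m,
          C * (C ^ (m - 1 - j) * exp (-2 ^ (m - 1 - j))) * hatw v (dyadicRadius m) := by
          refine Finset.sum_le_sum fun j hj => ?_
          obtain ⟨i, rfl⟩ : ∃ i, m = j + 1 + i :=
            ⟨m - 1 - j, by have := Finset.mem_range.mp hj; omega⟩
          rw [show j + 1 + i - 1 - j = i by omega]
          exact hv.integral_dyadic_piece_le hC j i
      _ = C * (∑ i ∈ Finset.range m, C ^ i * exp (-2 ^ i)) * hatw v (dyadicRadius m) := by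
          rw [← Finset.sum_mul, ← Finset.mul_sum,
            Finset.sum_range_reflect (fun i => C ^ i * exp (-2 ^ i)) m]
      _ ≤ C * S * hatw v (dyadicRadius m) := by
          gcongr
          exact (summable_pow_mul_exp_neg_two_pow C).sum_le_tsum _ fun i _ => by positivity
  have htail : ∫ s in dyadicRadius m..1, s ^ 2 ^ m * v s ≤ hatw v (dyadicRadius m) := by
    simpa [hatw] using hv.integral_pow_mul_le (2 ^ m) (dyadicRadius_mem_Ico m).1
      (dyadicRadius_mem_Ico m).2.le le_rfl
  linarith

lemma hatw_le_four_mul_vx (hv : RadialWeight v) (j : ℕ) :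
    hatw v (dyadicRadius (j + 1)) ≤ 4 * vx v (2 ^ (j + 1)) := by
  have hr := dyadicRadius_mem_Icc (j + 1)
  have hsplit := intervalIntegral.integral_add_adjacent_intervals
    (hv.intervalIntegrable_pow_mul (2 ^ (j + 1)) ⟨le_rfl, zero_le_one⟩ hr)
    (hv.intervalIntegrable_pow_mul (2 ^ (j + 1)) hr ⟨zero_le_one, le_rfl⟩)
  have hhead := (hv.integral_pow_mul_pos (2 ^ (j + 1)) le_rfl (dyadicRadius_succ_pos j) hr.2).le
  have htail := hv.pow_mul_hatw_le_integral (2 ^ (j + 1)) hr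
  have hW := (hv.hatw_pos (dyadicRadius_mem_Ico (j + 1))).le
  have hquarter := mul_le_mul_of_nonneg_right (quarter_le_dyadicRadius_pow j) hW
  rw [vx, ← hsplit]
  linarith

lemma ofReal_le_M1head (hv : RadialWeight v) {a b : ℝ} (ha : 0 ≤ a) (hab : a ≤ b) (hb : b < 1) :
    ENNReal.ofReal ((b - a) / hatw v a) ≤ M1head v b := by
  have hWa := hv.hatw_pos ⟨ha, hab.trans_lt hb⟩
  calc ENNReal.ofReal ((b - a) / hatw v a) = ∫⁻ _ in Ioo a b, ENNReal.ofReal (1 / hatw v a) := by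
        rw [setLIntegral_const, Real.volume_Ioo, ← ENNReal.ofReal_mul (by positivity)]
        congr 1; ring
    _ ≤ ∫⁻ s in Ioo a b, ENNReal.ofReal (1 / hatw v s) :=
        setLIntegral_mono' measurableSet_Ioo fun s hs => ENNReal.ofReal_le_ofReal <|
          one_div_le_one_div_of_le (hv.hatw_pos ⟨ha.trans hs.1.le, hs.2.trans hb⟩) <|
            hv.hatw_antitoneOn ⟨ha, hab.trans hb.le⟩ ⟨ha.trans hs.1.le, hs.2.le.trans hb.le⟩ hs.1.le
    _ ≤ M1head v b := lintegral_mono_set (Ioo_subset_Ioo_left ha)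

lemma ofReal_add_M1tail_le (hv : RadialWeight v) {a b : ℝ} (ha : 0 ≤ a) (hab : a ≤ b)
    (hb : b < 1) :
    ENNReal.ofReal ((b - a) * hatw v b / (1 - a) ^ 2) + M1tail v b ≤ M1tail v a := by
  have hWb := hv.hatw_pos ⟨ha.trans hab, hb⟩
  have hpiece : ENNReal.ofReal ((b - a) * hatw v b / (1 - a) ^ 2) ≤
      ∫⁻ s in Ioo a b, ENNReal.ofReal (hatw v s / (1 - s) ^ 2) :=
    calc ENNReal.ofReal ((b - a) * hatw v b / (1 - a) ^ 2)
        = ∫⁻ _ in Ioo a b, ENNReal.ofReal (hatw v b / (1 - a) ^ 2) := by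
          rw [setLIntegral_const, Real.volume_Ioo, ← ENNReal.ofReal_mul (by positivity)]
          congr 1; ring
      _ ≤ _ := setLIntegral_mono' measurableSet_Ioo fun s hs => by
          have hs0 : 0 ≤ s := ha.trans hs.1.le
          refine ENNReal.ofReal_le_ofReal (div_le_div₀ (hv.hatw_pos ⟨hs0, hs.2.trans hb⟩).le
            (hv.hatw_antitoneOn ⟨hs0, hs.2.le.trans hb.le⟩ ⟨ha.trans hab, hb.le⟩ hs.2.le)
            (by nlinarith [hs.2]) (pow_le_pow_left₀ (by linarith [hs.2]) (by linarith [hs.1]) 2))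
  calc ENNReal.ofReal ((b - a) * hatw v b / (1 - a) ^ 2) + M1tail v b
      ≤ (∫⁻ s in Ioo a b, ENNReal.ofReal (hatw v s / (1 - s) ^ 2)) + M1tail v b := by gcongr
    _ = ∫⁻ s in Ioo a b ∪ Ioo b 1, ENNReal.ofReal (hatw v s / (1 - s) ^ 2) :=
        (lintegral_union measurableSet_Ioo
          (disjoint_left.mpr fun _ hx hx' => (hx.2.trans hx'.1).false)).symm
    _ ≤ M1tail v a :=
        lintegral_mono_set (union_subset (Ioo_subset_Ioo_right hb.le) (Ioo_subset_Ioo_left hab))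

lemma M1head_pos (hv : RadialWeight v) {r : ℝ} (hr : r ∈ Ioo (0:ℝ) 1) : 0 < M1head v r :=
  (ENNReal.ofReal_pos.mpr (div_pos (by simpa using hr.1) (hv.hatw_pos ⟨le_rfl, zero_lt_one⟩)))
    |>.trans_le (hv.ofReal_le_M1head le_rfl hr.1.le hr.2)

lemma M1tail_ne_top (hv : RadialWeight v) (hM1 : M1v v < ⊤) {r : ℝ} (hr : r ∈ Ioo (0:ℝ) 1) :
    M1tail v r ≠ ⊤ := by
  intro htop
  have h := M1tail_mul_M1head_le v hr
  rw [htop, ENNReal.top_mul (hv.M1head_pos hr).ne'] at h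
  exact (ENNReal.pow_lt_top hM1).not_ge h

lemma M1tail_dyadic_le (hv : RadialWeight v)
    (hC : DyadicDoubling v C)
    (hM1 : M1v v < ⊤) (j : ℕ) :
    (M1tail v (dyadicRadius (j + 1))).toReal ≤
      (M1v v ^ 2).toReal * C * 2 ^ (j + 1) * hatw v (dyadicRadius (j + 1)) := by
  have hC0 := hv.pos_of_hatw_dyadicRadius_le hC
  have hW := hv.hatw_pos (dyadicRadius_mem_Ico (j + 1))
  have hx : 0 < ((2:ℝ) ^ (j + 1))⁻¹ / (C * hatw v (dyadicRadius (j + 1))) := by positivity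
  have hhead : ENNReal.ofReal (((2:ℝ) ^ (j + 1))⁻¹ / (C * hatw v (dyadicRadius (j + 1)))) ≤
      M1head v (dyadicRadius (j + 1)) := by
    refine (ENNReal.ofReal_le_ofReal (div_le_div_of_nonneg_left (by positivity)
      (hv.hatw_pos (dyadicRadius_mem_Ico j)) (hC j))).trans ?_
    simpa [dyadicRadius_succ_sub] using hv.ofReal_le_M1head (dyadicRadius_mem_Ico j).1
      (dyadicRadius_mono j.le_succ) (dyadicRadius_mem_Ico (j + 1)).2
  have hprod := ENNReal.toReal_mono (ENNReal.pow_lt_top hM1).ne <|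
    (mul_le_mul' le_rfl hhead).trans (M1tail_mul_M1head_le v
      ⟨dyadicRadius_succ_pos j, (dyadicRadius_mem_Ico _).2⟩)
  rw [ENNReal.toReal_mul, ENNReal.toReal_ofReal hx.le] at hprod
  calc (M1tail v (dyadicRadius (j + 1))).toReal
      ≤ (M1v v ^ 2).toReal / (((2:ℝ) ^ (j + 1))⁻¹ / (C * hatw v (dyadicRadius (j + 1)))) :=
        (le_div_iff₀ hx).mpr hprod
    _ = (M1v v ^ 2).toReal * C * 2 ^ (j + 1) * hatw v (dyadicRadius (j + 1)) := by
        field_simp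

lemma M1tail_dyadic_succ_add_le (hv : RadialWeight v) (hM1 : M1v v < ⊤) (j : ℕ) :
    (M1tail v (dyadicRadius (j + 2))).toReal + 2 ^ (j + 1) * hatw v (dyadicRadius (j + 2)) / 2 ≤
      (M1tail v (dyadicRadius (j + 1))).toReal := by
  have hmem : ∀ k, dyadicRadius (k + 1) ∈ Ioo (0:ℝ) 1 :=
    fun k => ⟨dyadicRadius_succ_pos k, (dyadicRadius_mem_Ico _).2⟩
  have hW := hv.hatw_pos (dyadicRadius_mem_Ico (j + 2))
  have harg : (dyadicRadius (j + 2) - dyadicRadius (j + 1)) * hatw v (dyadicRadius (j + 2)) /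
      (1 - dyadicRadius (j + 1)) ^ 2 = 2 ^ (j + 1) * hatw v (dyadicRadius (j + 2)) / 2 := by
    rw [show j + 2 = j + 1 + 1 from rfl, dyadicRadius_succ_sub, one_sub_dyadicRadius]
    field_simp
    ring
  have h := ENNReal.toReal_mono (hv.M1tail_ne_top hM1 (hmem j)) <|
    hv.ofReal_add_M1tail_le (a := dyadicRadius (j + 1)) (b := dyadicRadius (j + 2))
      (dyadicRadius_mem_Ico _).1 (dyadicRadius_mono (j + 1).le_succ) (dyadicRadius_mem_Ico _).2
  rwa [harg, ENNReal.toReal_add ENNReal.ofReal_ne_top (hv.M1tail_ne_top hM1 (hmem (j + 1))),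
    ENNReal.toReal_ofReal (by positivity), add_comm] at h

theorem exists_geometric_decay_hatw (hv : RadialWeight v)
    (hC : DyadicDoubling v C)
    (hM1 : M1v v < ⊤) :
    ∃ D θ : ℝ, 0 ≤ D ∧ 0 ≤ θ ∧ θ < 1 ∧ ∀ n i, 2 ^ (n + i) * hatw v (dyadicRadius (n + i + 1)) ≤
      D * θ ^ i * (2 ^ n * hatw v (dyadicRadius (n + 1))) := by
  have hC0 := hv.pos_of_hatw_dyadicRadius_le hC
  set A := 4 * ((M1v v ^ 2).toReal * C)
  have hA : 0 ≤ A := by positivity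
  refine ⟨C / 2 * A, A / (1 + A), by positivity, by positivity,
    (div_lt_one (by positivity)).mpr (by linarith), fun n i => ?_⟩
  have hdecay := geom_decay_of_tail_bounds (φ := fun j => (M1tail v (dyadicRadius (j + 1))).toReal)
    (χ := fun j => 2 ^ j * hatw v (dyadicRadius (j + 1)) / 2) (B := C / 2) hA (by positivity)
    (fun _ => ENNReal.toReal_nonneg)
    (fun j => (hv.M1tail_dyadic_le hC hM1 j).trans_eq (by ring))
    (fun j => by simpa only [add_assoc] using hv.M1tail_dyadic_succ_add_le hM1 j)
    (fun j => by
      have h2j : (0:ℝ) ≤ 2 ^ j := by positivity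
      rw [pow_succ]
      linarith [mul_le_mul_of_nonneg_left (hC (j + 1)) h2j]) n i
  linarith

theorem exists_geometric_decay_vx (hv : RadialWeight v)
    (hC : DyadicDoubling v C)
    (hM1 : M1v v < ⊤) :
    ∃ E θ : ℝ, 0 ≤ θ ∧ θ < 1 ∧ ∀ n i, 2 ^ (n + i) * vx v (2 ^ (n + i + 1)) ≤
      E * θ ^ i * (2 ^ n * vx v (2 ^ (n + 1))) := by
  obtain ⟨K, hK0, hK⟩ := hv.exists_vx_le_mul_hatw hC
  obtain ⟨D, θ, hD0, hθ0, hθ1, hdecay⟩ := hv.exists_geometric_decay_hatw hC hM1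
  refine ⟨4 * K * D, θ, hθ0, hθ1, fun n i => ?_⟩
  calc 2 ^ (n + i) * vx v (2 ^ (n + i + 1))
      ≤ K * (2 ^ (n + i) * hatw v (dyadicRadius (n + i + 1))) := by
        rw [mul_left_comm]; gcongr; exact hK _
    _ ≤ K * (D * θ ^ i * (2 ^ n * (4 * vx v (2 ^ (n + 1))))) := by
        refine mul_le_mul_of_nonneg_left ((hdecay n i).trans ?_) hK0.le
        exact mul_le_mul_of_nonneg_left
          (mul_le_mul_of_nonneg_left (hv.hatw_le_four_mul_vx n) (by positivity))
          (mul_nonneg hD0 (pow_nonneg hθ0 i))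
    _ = 4 * K * D * θ ^ i * (2 ^ n * vx v (2 ^ (n + 1))) := by ring

end RadialWeight

/-- Lemma 3.6: if `v ∈ D̂` and `M₁(v) < ∞` then for every `q > 0`,
`Σ_{n=1}^k 2^{-qn} v_{2^{n+1}}^{-q} ≤ C 2^{-qk} v_{2^{k+1}}^{-q}` for all `k ≥ 1`. -/
theorem statement12 (v : ℝ → ℝ) (hv : RadialWeight v) (hD : DoublingD v)
    (hM1 : M1v v < ⊤) :
    ∀ q : ℝ, 0 < q → ∃ C : ℝ, 0 < C ∧ ∀ k : ℕ, 1 ≤ k →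
      (∑ n ∈ Finset.Icc 1 k, (2:ℝ) ^ (-(q * (n:ℝ))) * (vx v (2^(n+1))) ^ (-q)) ≤
        C * (2:ℝ) ^ (-(q * (k:ℝ))) * (vx v (2^(k+1))) ^ (-q) := by
  intro q hq
  obtain ⟨C, hC⟩ := hD.exists_dyadicDoubling
  obtain ⟨E, θ, hθ0, hθ1, hdecay⟩ := hv.exists_geometric_decay_vx hC hM1
  obtain ⟨C', hC', hsum⟩ := exists_sum_rpow_neg_le (a := fun n => 2 ^ n * vx v (2 ^ (n + 1)))
    (fun n => mul_pos (by positivity) (hv.vx_pos _)) hθ0 hθ1 hdecay hq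
  have hterm : ∀ n : ℕ, (2:ℝ) ^ (-(q * n)) * vx v (2 ^ (n + 1)) ^ (-q) =
      (2 ^ n * vx v (2 ^ (n + 1))) ^ (-q) := fun n => by
    rw [mul_rpow (by positivity) (hv.vx_pos _).le, ← rpow_natCast_mul zero_le_two]
    congr 2
    ring
  refine ⟨C', hC', fun k _ => ?_⟩
  simpa only [hterm, mul_assoc] using hsum 1 k

end
end

section
/- Let v be a radial weight in the class D̂ satisfying ∫₀¹ v̂(s)/(1-s)² ds < ∞. Then sup_{n≥0} (n+1)·v_{2n+1} < ∞, where v_x = ∫₀¹ s^x v(s) ds; consequently there exists C = C(v) > 0 such that every function f analytic on 𝔻 with Taylor coefficients f̂(k) satisfies ‖f‖²_{D_v} ≤ C·(|f̂(0)|² + Σ_{k=1}^∞ k·|f̂(k)|²). -/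
/-!
Write `f' = ∑ c_k z^k` with `c_k = (k + 1) f̂(k + 1)`. Polar coordinates and Parseval's identity
on each circle `|z| = r` give `∫_𝔻 |f'|² v dA ≤ 2π ∑ |c_k|² ∫₀¹ r^(2k+1) v(r) dr`, so everything
reduces to the moment bound `(n + 1) v_{2n+1} ≤ 2 ∫₀¹ v̂(t) / (1 - t)² dt`. By Tonelli,
`v_{m+1} = ∫₀¹ (m + 1) t^m v̂(t) dt`, and `(n + 1)(2n + 1) t^(2n) (1 - t)² ≤ 2` because
`(n + 1) t^n (1 - t) ≤ (1 + t + ⋯ + t^n)(1 - t) = 1 - t^(n+1)`.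
-/

open MeasureTheory Real Set Filter

noncomputable section

open scoped ENNReal

section

open Finset Polynomial

-- Parseval's identity for the polynomial `∑ a_k r^k X^k` on the unit circle, moved from
-- `[0, 2π]` to `[-π, π]` by periodicity.
lemma integral_norm_sq_sum_circleMap (a : ℕ → ℂ) (N : ℕ) (r : ℝ) :
    ∫ θ in (-π)..π, ‖∑ k ∈ range N, a k * circleMap 0 r θ ^ k‖ ^ 2
      = 2 * π * ∑ k ∈ range N, ‖a k‖ ^ 2 * r ^ (2 * k) := by
  set p : ℂ[X] := ∑ k ∈ range N, monomial k (a k * r ^ k)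
  have heval : ∀ θ : ℝ, p.eval (circleMap 0 1 θ) = ∑ k ∈ range N, a k * circleMap 0 r θ ^ k := by
    intro θ
    simp [p, eval_finsetSum, circleMap_zero, mul_pow, mul_assoc]
  have hcoeff : ∀ i, p.coeff i = if i ∈ range N then a i * r ^ i else 0 := by
    intro i
    simp only [p, finsetSum_coeff, coeff_monomial, Finset.sum_ite_eq']
  have hsupp : p.support ⊆ range N := fun i hi => by
    by_contra h
    exact mem_support_iff.mp hi (by rw [hcoeff, if_neg h])
  have hperiodic : Function.Periodic (fun θ => ‖p.eval (circleMap 0 1 θ)‖ ^ 2) (2 * π) :=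
    fun θ => by simp only [periodic_circleMap 0 1 θ]
  have hshift := hperiodic.intervalIntegral_add_eq (-π) 0
  have hparseval := p.sum_sq_norm_coeff_eq_circleAverage
  rw [Real.circleAverage_def, smul_eq_mul, eq_inv_mul_iff_mul_eq₀ (by positivity),
    Finset.sum_subset hsupp fun i _ hi => by
      rw [notMem_support_iff.mp hi, norm_zero, sq, zero_mul],
    ← zero_add (2 * π), ← hshift, show -π + 2 * π = π by ring] at hparseval
  simp_rw [heval] at hparseval
  rw [← hparseval, zero_add]
  congr 1
  refine Finset.sum_congr rfl fun k hk => ?_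
  rw [hcoeff, if_pos hk, norm_mul, norm_pow, Complex.norm_real, Real.norm_eq_abs, mul_pow,
    ← pow_mul, pow_mul', sq_abs, ← pow_mul]

-- Only an upper bound is needed, so Fatou's lemma along the partial sums suffices.
lemma lintegral_enorm_sq_circleMap_le {F : ℝ → ℂ} (a : ℕ → ℂ) (r : ℝ)
    (hF : ∀ θ, HasSum (fun k => a k * circleMap 0 r θ ^ k) (F θ)) :
    ∫⁻ θ in Ioo (-π) π, ‖F θ‖ₑ ^ 2
      ≤ ENNReal.ofReal (2 * π) * ∑' k, ‖a k‖ₑ ^ 2 * ENNReal.ofReal (r ^ (2 * k)) := by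
  set S : ℕ → ℝ → ℂ := fun N θ => ∑ k ∈ range N, a k * circleMap 0 r θ ^ k
  have hS : ∀ N, Continuous (S N) := fun N => by fun_prop
  have hpartial : ∀ N, ∫⁻ θ in Ioo (-π) π, ‖S N θ‖ₑ ^ 2
      ≤ ENNReal.ofReal (2 * π) * ∑' k, ‖a k‖ₑ ^ 2 * ENNReal.ofReal (r ^ (2 * k)) := by
    intro N
    have hreal : ∫ θ in Ioo (-π) π, ‖S N θ‖ ^ 2
        = 2 * π * ∑ k ∈ range N, ‖a k‖ ^ 2 * r ^ (2 * k) := by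
      rw [← integral_Ioc_eq_integral_Ioo, ← intervalIntegral.integral_of_le (by linarith [pi_pos]),
        integral_norm_sq_sum_circleMap]
    simp_rw [← ofReal_norm, ← ENNReal.ofReal_pow (norm_nonneg _)]
    rw [← ofReal_integral_eq_lintegral_ofReal, hreal, ENNReal.ofReal_mul (by positivity),
      ENNReal.ofReal_sum_of_nonneg fun k _ =>
        mul_nonneg (sq_nonneg _) ((even_two_mul k).pow_nonneg r)]
    · gcongr
      refine le_of_eq_of_le (Finset.sum_congr rfl fun k _ => ?_) (ENNReal.sum_le_tsum _)
      rw [ENNReal.ofReal_mul (by positivity), ENNReal.ofReal_pow (norm_nonneg _)]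
    · exact ((hS N).norm.pow 2).integrableOn_Icc.mono_set Ioo_subset_Icc_self
    · exact ae_of_all _ fun θ => by positivity
  calc ∫⁻ θ in Ioo (-π) π, ‖F θ‖ₑ ^ 2
      = ∫⁻ θ in Ioo (-π) π, liminf (fun N => ‖S N θ‖ₑ ^ 2) atTop := by
        refine lintegral_congr fun θ => ?_
        refine (((ENNReal.continuous_pow 2).tendsto _).comp ?_).liminf_eq.symm
        exact (continuous_enorm.tendsto _).comp (hF θ).tendsto_sum_nat
    _ ≤ liminf (fun N => ∫⁻ θ in Ioo (-π) π, ‖S N θ‖ₑ ^ 2) atTop :=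
        lintegral_liminf_le fun N => (hS N).enorm.measurable.pow_const 2
    _ ≤ _ := liminf_le_of_frequently_le' (Frequently.of_forall hpartial)

end

lemma lintegral_ball_eq_lintegral_circleMap {g : ℂ → ℝ≥0∞} (hg : Measurable g) (R : ℝ) :
    ∫⁻ z in Metric.ball 0 R, g z
      = ∫⁻ r in Ioo 0 R, ENNReal.ofReal r * ∫⁻ θ in Ioo (-π) π, g (circleMap 0 r θ) := by
  have hpolar : ∀ p : ℝ × ℝ, Complex.polarCoord.symm p = circleMap 0 p.1 p.2 := fun p => by
    simp [circleMap_zero, Complex.exp_mul_I, ← Complex.ofReal_cos, ← Complex.ofReal_sin]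
  have hindicator : ∀ p ∈ Ioi (0 : ℝ) ×ˢ Ioo (-π) π,
      ENNReal.ofReal p.1 • (Metric.ball 0 R).indicator g (Complex.polarCoord.symm p)
        = (Iio R ×ˢ univ).indicator (fun p => ENNReal.ofReal p.1 * g (circleMap 0 p.1 p.2)) p := by
    rintro ⟨r, θ⟩ ⟨hr, -⟩
    have hmem : Complex.polarCoord.symm (r, θ) ∈ Metric.ball 0 R ↔ (r, θ) ∈ Iio R ×ˢ univ := by
      simp [abs_of_pos (show 0 < r from hr)]
    by_cases h : (r, θ) ∈ Iio R ×ˢ univ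
    · rw [indicator_of_mem (hmem.2 h), indicator_of_mem h, hpolar, smul_eq_mul]
    · rw [indicator_of_notMem (mt hmem.1 h), indicator_of_notMem h, smul_zero]
  have hmeas : Measurable fun p : ℝ × ℝ => ENNReal.ofReal p.1 * g (circleMap 0 p.1 p.2) :=
    measurable_fst.ennreal_ofReal.mul (hg.comp (by fun_prop : Continuous fun p : ℝ × ℝ =>
      circleMap 0 p.1 p.2).measurable)
  rw [← lintegral_indicator Metric.isOpen_ball.measurableSet,
    ← Complex.lintegral_comp_polarCoord_symm, polarCoord_target,
    setLIntegral_congr_fun (measurableSet_Ioi.prod measurableSet_Ioo) hindicator,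
    lintegral_indicator (measurableSet_Iio.prod MeasurableSet.univ),
    Measure.restrict_restrict (measurableSet_Iio.prod MeasurableSet.univ), prod_inter_prod,
    Iio_inter_Ioi, univ_inter, Measure.volume_eq_prod, setLIntegral_prod _ hmeas.aemeasurable]
  exact lintegral_congr fun r => lintegral_const_mul' _ _ ENNReal.ofReal_ne_top

lemma lintegral_ball_enorm_sq_mul_le {h : ℂ → ℂ} (hh : Measurable h) {w : ℝ → ℝ}
    (hw : Measurable w) {R : ℝ} (c : ℕ → ℂ)
    (hc : ∀ z ∈ Metric.ball (0 : ℂ) R, HasSum (fun k => c k * z ^ k) (h z)) :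
    ∫⁻ z in Metric.ball 0 R, ‖h z‖ₑ ^ 2 * ENNReal.ofReal (w ‖z‖)
      ≤ ENNReal.ofReal (2 * π) *
          ∑' k, ‖c k‖ₑ ^ 2 * ∫⁻ r in Ioo 0 R, ENNReal.ofReal (r ^ (2 * k + 1) * w r) := by
  rw [lintegral_ball_eq_lintegral_circleMap (by fun_prop)]
  calc ∫⁻ r in Ioo 0 R, ENNReal.ofReal r *
        ∫⁻ θ in Ioo (-π) π, ‖h (circleMap 0 r θ)‖ₑ ^ 2 * ENNReal.ofReal (w ‖circleMap 0 r θ‖)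
      ≤ ∫⁻ r in Ioo 0 R, ENNReal.ofReal (2 * π) *
          ∑' k, ‖c k‖ₑ ^ 2 * ENNReal.ofReal (r ^ (2 * k + 1) * w r) := by
        refine setLIntegral_mono' measurableSet_Ioo fun r hr => ?_
        have hnorm : ∀ θ, ‖circleMap 0 r θ‖ = r := fun θ => by
          rw [norm_circleMap_zero, abs_of_pos hr.1]
        simp_rw [hnorm]
        rw [lintegral_mul_const' _ _ ENNReal.ofReal_ne_top]
        calc ENNReal.ofReal r *
              ((∫⁻ θ in Ioo (-π) π, ‖h (circleMap 0 r θ)‖ₑ ^ 2) * ENNReal.ofReal (w r))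
            ≤ ENNReal.ofReal r * ((ENNReal.ofReal (2 * π) *
                ∑' k, ‖c k‖ₑ ^ 2 * ENNReal.ofReal (r ^ (2 * k))) * ENNReal.ofReal (w r)) := by
              gcongr
              exact lintegral_enorm_sq_circleMap_le c r fun θ =>
                hc _ (by rw [mem_ball_zero_iff, hnorm]; exact hr.2)
          _ = _ := by
              have hsplit : ∀ k, ‖c k‖ₑ ^ 2 * ENNReal.ofReal (r ^ (2 * k + 1) * w r)
                  = ‖c k‖ₑ ^ 2 * ENNReal.ofReal (r ^ (2 * k)) *
                      (ENNReal.ofReal r * ENNReal.ofReal (w r)) := by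
                intro k
                rw [ENNReal.ofReal_mul (pow_nonneg hr.1.le _), pow_succ r,
                  ENNReal.ofReal_mul (pow_nonneg hr.1.le _)]
                ring
              rw [tsum_congr hsplit, ENNReal.tsum_mul_right]
              ring
    _ = _ := by
        rw [lintegral_const_mul' _ _ ENNReal.ofReal_ne_top, lintegral_tsum
          (f := fun k r => ‖c k‖ₑ ^ 2 * ENNReal.ofReal (r ^ (2 * k + 1) * w r))
          fun k => (by fun_prop : Measurable _).aemeasurable]
        exact congrArg _ (tsum_congr fun k => lintegral_const_mul' _ _ (by finiteness))

lemma hasSum_deriv_gcoef {f : ℂ → ℂ} {R : ℝ} (hf : DifferentiableOn ℂ f (Metric.ball 0 R))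
    {z : ℂ} (hz : z ∈ Metric.ball 0 R) :
    HasSum (fun k : ℕ => ((k : ℂ) + 1) * gcoef f (k + 1) * z ^ k) (deriv f z) := by
  refine (Complex.hasSum_taylorSeries_on_ball
    (hf.analyticOnNhd Metric.isOpen_ball).deriv.differentiableOn hz).congr_fun fun k => ?_
  rw [gcoef, iteratedDeriv_succ', Nat.factorial_succ, sub_zero, smul_eq_mul, smul_eq_mul]
  push_cast
  field_simp

lemma dvSq_le {v : ℝ → ℝ} (hv : Measurable v) {f : ℂ → ℂ}
    (hf : DifferentiableOn ℂ f (Metric.ball 0 1)) :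
    DvSq v f ≤ ‖gcoef f 0‖ₑ ^ 2 + 2 * ∑' k : ℕ, ((k : ℝ≥0∞) + 1) * ‖gcoef f (k + 1)‖ₑ ^ 2 *
      (((k : ℝ≥0∞) + 1) * ∫⁻ r in Ioo 0 1, ENNReal.ofReal (r ^ (2 * k + 1) * v r)) := by
  have hπ : (ENNReal.ofReal π)⁻¹ * ENNReal.ofReal (2 * π) = 2 := by
    rw [ENNReal.ofReal_mul zero_le_two, mul_left_comm, ENNReal.inv_mul_cancel
      (ENNReal.ofReal_pos.mpr pi_pos).ne' ENNReal.ofReal_ne_top]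
    simp
  have hcoef : ∀ k : ℕ, ‖((k : ℂ) + 1) * gcoef f (k + 1)‖ₑ ^ 2
      = ((k : ℝ≥0∞) + 1) * ‖gcoef f (k + 1)‖ₑ ^ 2 * ((k : ℝ≥0∞) + 1) := fun k => by
    have hk : ‖(k : ℂ) + 1‖ₑ = (k : ℝ≥0∞) + 1 := by
      rw [← ofReal_norm]
      norm_cast
    rw [enorm_mul, hk]
    ring
  rw [DvSq, show gcoef f 0 = f 0 by simp [gcoef]]
  simp only [← enorm_eq_nnnorm]
  gcongr _ + ?_
  calc (ENNReal.ofReal π)⁻¹ * ∫⁻ z in Metric.ball 0 1, ‖deriv f z‖ₑ ^ 2 * ENNReal.ofReal (v ‖z‖)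
      ≤ (ENNReal.ofReal π)⁻¹ * (ENNReal.ofReal (2 * π) * ∑' k : ℕ,
          ‖((k : ℂ) + 1) * gcoef f (k + 1)‖ₑ ^ 2 *
            ∫⁻ r in Ioo 0 1, ENNReal.ofReal (r ^ (2 * k + 1) * v r)) := by
        gcongr
        exact lintegral_ball_enorm_sq_mul_le (measurable_deriv f) hv _ fun z hz =>
          hasSum_deriv_gcoef hf hz
    _ = _ := by
        simp_rw [← mul_assoc, hπ, hcoef]

lemma succ_mul_pow_mul_one_sub_le_one (n : ℕ) {t : ℝ} (h0 : 0 ≤ t) (h1 : t ≤ 1) :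
    (n + 1) * t ^ n * (1 - t) ≤ 1 := by
  have hgeom : (n + 1) * t ^ n ≤ ∑ i ∈ Finset.range (n + 1), t ^ i := by
    simpa using Finset.card_nsmul_le_sum (Finset.range (n + 1)) (t ^ ·) (t ^ n)
      fun i hi => pow_le_pow_of_le_one h0 h1 (Nat.lt_succ_iff.mp (Finset.mem_range.mp hi))
  calc (n + 1) * t ^ n * (1 - t) ≤ (∑ i ∈ Finset.range (n + 1), t ^ i) * (1 - t) :=
        mul_le_mul_of_nonneg_right hgeom (by linarith)
    _ = 1 - t ^ (n + 1) := geom_sum_mul_neg t (n + 1)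
    _ ≤ 1 := by linarith [pow_nonneg h0 (n + 1)]

-- Both sides integrate `f s * g t` over the triangle `a < t < s < b`.
lemma lintegral_mul_lintegral_Ioo_comm {f g : ℝ → ℝ≥0∞} (hf : Measurable f) (hg : Measurable g)
    (a b : ℝ) :
    ∫⁻ s in Ioo a b, f s * ∫⁻ t in Ioo a s, g t = ∫⁻ t in Ioo a b, g t * ∫⁻ s in Ioo t b, f s := by
  set H : ℝ × ℝ → ℝ≥0∞ := {p | p.2 < p.1}.indicator fun p => f p.1 * g p.2
  have hH : Measurable H := ((hf.comp measurable_fst).mul (hg.comp measurable_snd)).indicator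
    (measurableSet_lt measurable_snd measurable_fst)
  have hinner₁ : ∀ s ∈ Ioo a b, ∫⁻ t in Ioo a b, H (s, t) = f s * ∫⁻ t in Ioo a s, g t := by
    intro s hs
    have : ∀ t, H (s, t) = f s * (Iio s).indicator g t := fun t => by
      by_cases ht : t < s <;> simp [H, ht]
    rw [lintegral_congr this, lintegral_const_mul _ (hg.indicator measurableSet_Iio),
      lintegral_indicator measurableSet_Iio, Measure.restrict_restrict measurableSet_Iio,
      inter_comm, Ioo_inter_Iio, min_eq_right hs.2.le]
  have hinner₂ : ∀ t ∈ Ioo a b, ∫⁻ s in Ioo a b, H (s, t) = g t * ∫⁻ s in Ioo t b, f s := by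
    intro t ht
    have : ∀ s, H (s, t) = g t * (Ioi t).indicator f s := fun s => by
      by_cases hs : t < s <;> simp [H, hs, mul_comm]
    rw [lintegral_congr this, lintegral_const_mul _ (hf.indicator measurableSet_Ioi),
      lintegral_indicator measurableSet_Ioi, Measure.restrict_restrict measurableSet_Ioi,
      inter_comm, Ioo_inter_Ioi, max_eq_right ht.1.le]
  rw [← setLIntegral_congr_fun measurableSet_Ioo hinner₁,
    ← setLIntegral_congr_fun measurableSet_Ioo hinner₂]
  exact lintegral_lintegral_swap hH.aemeasurable

lemma lintegral_Ioo_ofReal_succ_mul_pow (m : ℕ) {s : ℝ} (hs : 0 ≤ s) :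
    ∫⁻ t in Ioo 0 s, ENNReal.ofReal ((m + 1) * t ^ m) = ENNReal.ofReal (s ^ (m + 1)) := by
  rw [← ofReal_integral_eq_lintegral_ofReal, ← integral_Ioc_eq_integral_Ioo,
    ← intervalIntegral.integral_of_le hs, intervalIntegral.integral_const_mul, integral_pow]
  · field_simp
    simp
  · exact (continuous_const.mul (continuous_pow m)).integrableOn_Icc.mono_set Ioo_subset_Icc_self
  · exact (ae_restrict_iff' measurableSet_Ioo).2 (ae_of_all _ fun t ht => by
      have := ht.1.le; positivity)

namespace RadialWeight

variable {v : ℝ → ℝ}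

lemma nonneg_ae_restrict (hv : RadialWeight v) {a b : ℝ} (ha : 0 ≤ a) (hb : b ≤ 1) :
    0 ≤ᵐ[volume.restrict (Ioo a b)] v :=
  (ae_restrict_iff' measurableSet_Ioo).2 (ae_of_all _ fun s hs =>
    (hv.2.1 s ⟨ha.trans hs.1.le, hs.2.trans_le hb⟩).le)

lemma ofReal_hatw (hv : RadialWeight v) {t : ℝ} (ht : t ∈ Ico 0 1) :
    ENNReal.ofReal (hatw v t) = ∫⁻ s in Ioo t 1, ENNReal.ofReal (v s) := by
  rw [hatw, intervalIntegral.integral_of_le ht.2.le, integral_Ioc_eq_integral_Ioo]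
  exact ofReal_integral_eq_lintegral_ofReal (hv.2.2.mono_set (Ioo_subset_Ioo_left ht.1))
    (hv.nonneg_ae_restrict ht.1 le_rfl)

lemma hatw_nonneg (hv : RadialWeight v) {t : ℝ} (ht : t ∈ Ico 0 1) : 0 ≤ hatw v t := by
  rw [hatw, intervalIntegral.integral_of_le ht.2.le, integral_Ioc_eq_integral_Ioo]
  exact integral_nonneg_of_ae (hv.nonneg_ae_restrict ht.1 le_rfl)

lemma vx_eq_toReal_lintegral (hv : RadialWeight v) (k : ℕ) :
    vx v k = (∫⁻ s in Ioo 0 1, ENNReal.ofReal (s ^ k * v s)).toReal := by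
  rw [vx, intervalIntegral.integral_of_le zero_le_one, integral_Ioc_eq_integral_Ioo]
  refine integral_eq_lintegral_of_nonneg_ae ?_
    ((measurable_id.pow_const k).mul hv.1).aestronglyMeasurable
  filter_upwards [hv.nonneg_ae_restrict le_rfl le_rfl, ae_restrict_mem measurableSet_Ioo]
    with s hv_s hs
  exact mul_nonneg (pow_nonneg hs.1.le k) hv_s

lemma lintegral_pow_succ_mul_eq (hv : RadialWeight v) (m : ℕ) :
    ∫⁻ s in Ioo 0 1, ENNReal.ofReal (s ^ (m + 1) * v s)
      = ∫⁻ t in Ioo 0 1, ENNReal.ofReal ((m + 1) * t ^ m) * ENNReal.ofReal (hatw v t) := by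
  calc ∫⁻ s in Ioo 0 1, ENNReal.ofReal (s ^ (m + 1) * v s)
      = ∫⁻ s in Ioo 0 1,
          ENNReal.ofReal (v s) * ∫⁻ t in Ioo 0 s, ENNReal.ofReal ((m + 1) * t ^ m) := by
        refine setLIntegral_congr_fun measurableSet_Ioo fun s hs => ?_
        rw [lintegral_Ioo_ofReal_succ_mul_pow m hs.1.le,
          ← ENNReal.ofReal_mul (hv.2.1 s ⟨hs.1.le, hs.2⟩).le, mul_comm]
    _ = ∫⁻ t in Ioo 0 1,
          ENNReal.ofReal ((m + 1) * t ^ m) * ∫⁻ s in Ioo t 1, ENNReal.ofReal (v s) :=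
        lintegral_mul_lintegral_Ioo_comm hv.1.ennreal_ofReal (by fun_prop) 0 1
    _ = _ := setLIntegral_congr_fun measurableSet_Ioo fun t ht => by
        rw [← hv.ofReal_hatw ⟨ht.1.le, ht.2⟩]

lemma succ_mul_lintegral_moment_le (hv : RadialWeight v) (n : ℕ) :
    ((n : ℝ≥0∞) + 1) * ∫⁻ s in Ioo 0 1, ENNReal.ofReal (s ^ (2 * n + 1) * v s)
      ≤ 2 * ∫⁻ s in Ioo 0 1, ENNReal.ofReal (hatw v s / (1 - s) ^ 2) := by
  rw [hv.lintegral_pow_succ_mul_eq, ← lintegral_const_mul' _ _ (by simp),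
    ← lintegral_const_mul' _ _ (by simp)]
  refine setLIntegral_mono' measurableSet_Ioo fun t ht => ?_
  have ht0 : 0 ≤ t := ht.1.le
  have ht1 : 0 ≤ 1 - t := by linarith [ht.2]
  have hweight : ((n : ℝ) + 1) * ((2 * n + 1) * t ^ (2 * n)) * (1 - t) ^ 2 ≤ 2 := by
    have hbase : 0 ≤ (n + 1) * t ^ n * (1 - t) := by positivity
    have hsq := pow_le_one₀ (n := 2) hbase (succ_mul_pow_mul_one_sub_le_one n ht0 ht.2.le)
    have hpow : 0 ≤ t ^ (2 * n) * (1 - t) ^ 2 := by positivity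
    calc ((n : ℝ) + 1) * ((2 * n + 1) * t ^ (2 * n)) * (1 - t) ^ 2
        ≤ 2 * ((n + 1) * t ^ n * (1 - t)) ^ 2 := by rw [pow_mul']; nlinarith
      _ ≤ 2 := by linarith
  have hhatw := hv.hatw_nonneg ⟨ht0, ht.2⟩
  rw [show ((n : ℝ≥0∞) + 1) = ENNReal.ofReal (n + 1) by simp [ENNReal.ofReal_add],
    show (2 : ℝ≥0∞) = ENNReal.ofReal 2 by simp, ← ENNReal.ofReal_mul (by positivity),
    ← ENNReal.ofReal_mul (by positivity), ← ENNReal.ofReal_mul zero_le_two]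
  refine ENNReal.ofReal_le_ofReal ?_
  rw [mul_div_assoc', le_div_iff₀ (by nlinarith [ht.2]), Nat.cast_mul, Nat.cast_two]
  calc (↑n + 1) * ((2 * ↑n + 1) * t ^ (2 * n) * hatw v t) * (1 - t) ^ 2
      = ((n + 1) * ((2 * n + 1) * t ^ (2 * n)) * (1 - t) ^ 2) * hatw v t := by ring
    _ ≤ 2 * hatw v t := mul_le_mul_of_nonneg_right hweight hhatw

end RadialWeight

theorem statement17_general (v : ℝ → ℝ) (hv : RadialWeight v)
    (hint : ∫⁻ s in Set.Ioo (0:ℝ) 1, ENNReal.ofReal (hatw v s / (1-s)^2) < ⊤) :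
    (∃ B : ℝ, ∀ n : ℕ, ((n:ℝ) + 1) * vx v (2*n+1) ≤ B) ∧
    ∃ C : ℝ, 0 < C ∧ ∀ f : ℂ → ℂ, DifferentiableOn ℂ f (Metric.ball 0 1) →
      DvSq v f ≤ ENNReal.ofReal C *
        ((‖gcoef f 0‖₊ : ENNReal)^2 +
          ∑' k : ℕ, ((k : ENNReal) + 1) * (‖gcoef f (k+1)‖₊ : ENNReal)^2) := by
  set I := ∫⁻ s in Set.Ioo (0:ℝ) 1, ENNReal.ofReal (hatw v s / (1-s)^2)
  have hI : I ≠ ⊤ := hint.ne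
  have hmoment := hv.succ_mul_lintegral_moment_le
  refine ⟨⟨2 * I.toReal, fun n => ?_⟩, 1 + 4 * I.toReal, by positivity, fun f hf => ?_⟩
  · have := ENNReal.toReal_mono (by finiteness) (hmoment n)
    rwa [ENNReal.toReal_mul, ENNReal.toReal_mul, ← hv.vx_eq_toReal_lintegral] at this
  · simp only [← enorm_eq_nnnorm]
    set S := ∑' k : ℕ, ((k : ℝ≥0∞) + 1) * ‖gcoef f (k + 1)‖ₑ ^ 2
    calc DvSq v f
        ≤ ‖gcoef f 0‖ₑ ^ 2 + 2 * ∑' k : ℕ, ((k : ℝ≥0∞) + 1) * ‖gcoef f (k + 1)‖ₑ ^ 2 * (2 * I) :=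
          (dvSq_le hv.1 hf).trans (by gcongr _ + 2 * ∑' k, _ * ?_ with k; exact hmoment k)
      _ = ‖gcoef f 0‖ₑ ^ 2 + 4 * I * S := by rw [ENNReal.tsum_mul_right]; ring
      _ ≤ ENNReal.ofReal (1 + 4 * I.toReal) * (‖gcoef f 0‖ₑ ^ 2 + S) := by
          rw [ENNReal.ofReal_add zero_le_one (by positivity), ENNReal.ofReal_mul zero_le_four,
            ENNReal.ofReal_toReal hI, ENNReal.ofReal_one, ENNReal.ofReal_ofNat, add_mul, one_mul,
            mul_add]
          exact add_le_add le_self_add le_add_self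

/-- the embedding (3.2): if `v ∈ D̂` and `∫_0^1 v̂(s)/(1-s)² ds < ∞`, then
`sup_n (n+1) v_{2n+1} < ∞` and consequently `B(2,2) ⊂ D_v` with norm estimate. -/
theorem statement17 (v : ℝ → ℝ) (hv : RadialWeight v) (hD : DoublingD v)
    (hint : ∫⁻ s in Set.Ioo (0:ℝ) 1, ENNReal.ofReal (hatw v s / (1-s)^2) < ⊤) :
    (∃ B : ℝ, ∀ n : ℕ, ((n:ℝ) + 1) * vx v (2*n+1) ≤ B) ∧
    ∃ C : ℝ, 0 < C ∧ ∀ f : ℂ → ℂ, DifferentiableOn ℂ f (Metric.ball 0 1) →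
      DvSq v f ≤ ENNReal.ofReal C *
        ((‖gcoef f 0‖₊ : ENNReal)^2 +
          ∑' k : ℕ, ((k : ENNReal) + 1) * (‖gcoef f (k+1)‖₊ : ENNReal)^2) :=
  statement17_general v hv hint

end
end
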